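/- arXiv:1907.05473 — 2 statements merged into one kernel-verified Lean document; each statement's English description precedes it below -/
import Mathlib

section
/- Let d' > 0 and let c_1,...,c_n ≥ 0 with weights x'_1,...,x'_n ∈ [0,1] satisfy Σ_i min(c_i, d')·x'_i ≥ β·d' with β ≥ 8. For each i define its class cl(i) as the smallest nonnegative integer j with c_i ≥ 2^{−j}·d'. Suppose a set S ⊆ [n] satisfies, for every j ≥ 0, |{i ∈ S : cl(i) ≤ j}| ≥ ⌊Σ_{i: cl(i) ≤ j} x'_i⌋. Then Σ_{i∈S} c_i ≥ d'. -/
/-!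
With `w i = 2 ^ (-cl i)` we have `w i * d' ≤ c i` and `min (c i) d' ≤ 2 * w i * d'`, so the
covering inequality gives `∑ w i * x' i ≥ β / 2 ≥ 4`. Writing `w i` as a nonnegative combination
of the indicators of the prefixes `{cl ≤ j}` (summation by parts, the weights adding up to
`w 0 = 1`), the prefix-count bound `|S ∩ {cl ≤ j}| ≥ x'({cl ≤ j}) - 1` transfers to
`∑_{i ∈ S} w i ≥ ∑ w i * x' i - 1 ≥ 3`, whence `∑_{i ∈ S} c i ≥ 3 d' ≥ d'`.
-/

open Finset

variable {ι : Type*}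

theorem Finset.sum_Ico_sub_succ (a : ℕ → ℝ) {m n : ℕ} (h : m ≤ n) :
    ∑ j ∈ Ico m n, (a j - a (j + 1)) = a m - a n := by
  rw [← neg_sub, ← sum_Ico_sub a h, ← sum_neg_distrib]
  simp only [neg_sub]

theorem Finset.sum_comp_mul_eq_layer_sum (a : ℕ → ℝ) (lvl : ι → ℕ) (g : ι → ℝ) (s : Finset ι)
    {J : ℕ} (hJ : ∀ i ∈ s, lvl i ≤ J) :
    ∑ i ∈ s, a (lvl i) * g i = a J * ∑ i ∈ s, g i +
      ∑ j ∈ range J, (a j - a (j + 1)) * ∑ i ∈ s with lvl i ≤ j, g i := by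
  have hlayer : ∀ i ∈ s, a (lvl i) = a J + ∑ j ∈ range J with lvl i ≤ j, (a j - a (j + 1)) := by
    intro i hi
    have : (range J).filter (lvl i ≤ ·) = Ico (lvl i) J := by ext j; simp; omega
    rw [this, sum_Ico_sub_succ a (hJ i hi)]
    ring
  simp_rw [mul_sum, sum_filter]
  rw [sum_comm, ← sum_add_distrib]
  refine sum_congr rfl fun i hi => ?_
  rw [hlayer i hi, add_mul, sum_mul, sum_filter]

theorem Finset.sum_comp_mul_le_of_forall_sum_filter_le (a : ℕ → ℝ) (ha : Antitone a)
    (ha₀ : ∀ j, 0 ≤ a j) (lvl : ι → ℕ) (s t : Finset ι) (g h : ι → ℝ) (δ : ℝ)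
    (hlevel : ∀ j, ∑ i ∈ s with lvl i ≤ j, g i ≤ ∑ i ∈ t with lvl i ≤ j, h i + δ) :
    ∑ i ∈ s, a (lvl i) * g i ≤ ∑ i ∈ t, a (lvl i) * h i + a 0 * δ := by
  classical
  set J := (s ∪ t).sup lvl
  have hJ : ∀ i ∈ s ∪ t, lvl i ≤ J := fun i hi => le_sup hi
  have htop : ∀ u ⊆ s ∪ t, ∀ f : ι → ℝ, ∑ i ∈ u with lvl i ≤ J, f i = ∑ i ∈ u, f i :=
    fun u hu f => by rw [filter_true_of_mem fun i hi => hJ i (hu hi)]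
  rw [sum_comp_mul_eq_layer_sum a lvl g s fun i hi => hJ i (mem_union_left t hi),
    sum_comp_mul_eq_layer_sum a lvl h t fun i hi => hJ i (mem_union_right s hi)]
  have htel : a 0 * δ = a J * δ + (∑ j ∈ range J, (a j - a (j + 1))) * δ := by
    rw [sum_range_sub']; ring
  have htop_le : a J * ∑ i ∈ s, g i ≤ a J * (∑ i ∈ t, h i + δ) := by
    have := hlevel J
    rw [htop s subset_union_left, htop t subset_union_right] at this
    exact mul_le_mul_of_nonneg_left this (ha₀ J)
  have hlayers : ∑ j ∈ range J, (a j - a (j + 1)) * ∑ i ∈ s with lvl i ≤ j, g i ≤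
      ∑ j ∈ range J, (a j - a (j + 1)) * ∑ i ∈ t with lvl i ≤ j, h i +
        (∑ j ∈ range J, (a j - a (j + 1))) * δ := by
    rw [sum_mul, ← sum_add_distrib]
    refine sum_le_sum fun j _ => ?_
    rw [← mul_add]
    exact mul_le_mul_of_nonneg_left (hlevel j) (sub_nonneg.2 (ha j.le_succ))
  linarith

theorem min_le_two_mul_zpow_of_isLeast {c d : ℝ} (hd : 0 ≤ d) {m : ℕ}
    (hm : IsLeast {j : ℕ | (2:ℝ) ^ (-(j:ℤ)) * d ≤ c} m) :
    min c d ≤ 2 * ((2:ℝ) ^ (-(m:ℤ)) * d) := by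
  obtain _ | k := m
  · simp only [CharP.cast_eq_zero, neg_zero, zpow_zero, one_mul]
    linarith [min_le_right c d]
  · have hk : c < (2:ℝ) ^ (-(k:ℤ)) * d := not_le.1 fun h => by simpa using hm.2 h
    have h2 : (2:ℝ) ^ (-(k:ℤ)) = 2 * (2:ℝ) ^ (-((k + 1 : ℕ) : ℤ)) := by
      rw [Nat.cast_succ, neg_add, zpow_add₀ two_ne_zero]; norm_num; ring
    rw [h2, mul_assoc] at hk
    exact (min_le_left c d).trans hk.le

theorem antitone_two_zpow_neg : Antitone fun j : ℕ => (2:ℝ) ^ (-(j:ℤ)) :=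
  fun _ _ h => zpow_le_zpow_right₀ one_le_two (neg_le_neg (Nat.cast_le.2 h))

theorem capacitated_cover_feasible_general (n : ℕ) (d' : ℝ) (hd' : 0 < d')
    (c : Fin n → ℝ)
    (x' : Fin n → ℝ) (hx' : ∀ i, x' i ∈ Set.Icc (0:ℝ) 1)
    (β : ℝ) (hβ : 8 ≤ β)
    (hcov : β * d' ≤ ∑ i : Fin n, min (c i) d' * x' i)
    (cl : Fin n → ℕ)
    (hcl : ∀ i, IsLeast {j : ℕ | (2:ℝ) ^ (-(j:ℤ)) * d' ≤ c i} (cl i))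
    (S : Finset (Fin n))
    (hS : ∀ j : ℕ,
      (⌊∑ i ∈ Finset.univ.filter (fun i => cl i ≤ j), x' i⌋ : ℝ) ≤
        (S.filter (fun i => cl i ≤ j)).card) :
    d' ≤ ∑ i ∈ S, c i := by
  set w : ℕ → ℝ := fun j => (2:ℝ) ^ (-(j:ℤ))
  have hmass : 4 ≤ ∑ i, w (cl i) * x' i := by
    have hcov' : 2 * d' * 4 ≤ 2 * d' * ∑ i, w (cl i) * x' i := by
      refine le_trans (by linarith [mul_le_mul_of_nonneg_right hβ hd'.le]) (hcov.trans ?_)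
      rw [mul_sum]
      refine sum_le_sum fun i _ => ?_
      have := mul_le_mul_of_nonneg_right
        (min_le_two_mul_zpow_of_isLeast hd'.le (hcl i)) (hx' i).1
      linarith
    exact le_of_mul_le_mul_left hcov' (by positivity)
  have hlevel : ∀ j, ∑ i ∈ univ with cl i ≤ j, x' i ≤ ∑ i ∈ S with cl i ≤ j, (1 : ℝ) + 1 := by
    intro j
    rw [sum_const, nsmul_one]
    linarith [hS j, Int.lt_floor_add_one (∑ i ∈ univ with cl i ≤ j, x' i)]
  have hS3 : 3 ≤ ∑ i ∈ S, w (cl i) := by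
    have := sum_comp_mul_le_of_forall_sum_filter_le w antitone_two_zpow_neg
      (fun j => (zpow_pos two_pos _).le) cl univ S x' 1 1 hlevel
    simp only [w, Pi.one_apply, mul_one, CharP.cast_eq_zero, neg_zero, zpow_zero] at this ⊢
    linarith
  calc d' ≤ (∑ i ∈ S, w (cl i)) * d' := le_mul_of_one_le_left hd'.le (by linarith)
    _ = ∑ i ∈ S, w (cl i) * d' := sum_mul ..
    _ ≤ ∑ i ∈ S, c i := sum_le_sum fun i _ => (hcl i).1

/-- Core combinatorial claim of the capacitated-to-uncapacitated reduction,
specialized to a single point. -/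
theorem capacitated_cover_feasible (n : ℕ) (d' : ℝ) (hd' : 0 < d')
    (c : Fin n → ℝ) (hc : ∀ i, 0 ≤ c i)
    (x' : Fin n → ℝ) (hx' : ∀ i, x' i ∈ Set.Icc (0:ℝ) 1)
    (β : ℝ) (hβ : 8 ≤ β)
    (hcov : β * d' ≤ ∑ i : Fin n, min (c i) d' * x' i)
    (cl : Fin n → ℕ)
    (hcl : ∀ i, IsLeast {j : ℕ | (2:ℝ) ^ (-(j:ℤ)) * d' ≤ c i} (cl i))
    (S : Finset (Fin n))
    (hS : ∀ j : ℕ,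
      (⌊∑ i ∈ Finset.univ.filter (fun i => cl i ≤ j), x' i⌋ : ℝ) ≤
        (S.filter (fun i => cl i ≤ j)).card) :
    d' ≤ ∑ i ∈ S, c i :=
  capacitated_cover_feasible_general n d' hd' c x' hx' β hβ hcov cl hcl S hS
end

section
/- Let f, g : ℝ → ℝ be two functions, where f(x) = max(x − a_1, 0)·1_{[a_1,b_1]}(x) and g(x) = max(x − a_2, 0)·1_{[a_2,b_2]}(x) are right-triangular profiles of slope 1 (each zero outside its interval). Then, as x increases over ℝ, the sequence of which function is strictly larger contains no alternation of the form f > g, then g > f, then f > g, then g > f (i.e., there are at most 3 maximal sign intervals). -/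
private lemma tri_nonneg (a b : ℝ) (f : ℝ → ℝ)
    (hf : ∀ x, f x = if x ∈ Set.Icc a b then max (x - a) 0 else 0) (x : ℝ) :
    0 ≤ f x := by
  rw [hf]; split <;> simp [le_max_right]

private lemma tri_gt (a₁ b₁ a₂ b₂ : ℝ) (f g : ℝ → ℝ)
    (hf : ∀ x, f x = if x ∈ Set.Icc a₁ b₁ then max (x - a₁) 0 else 0)
    (hg : ∀ x, g x = if x ∈ Set.Icc a₂ b₂ then max (x - a₂) 0 else 0)
    (ha : a₂ ≤ a₁) {x : ℝ} (hx : f x > g x) : b₂ < x := by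
  have hg0 : 0 ≤ g x := tri_nonneg a₂ b₂ g hg x
  have hfpos : 0 < f x := lt_of_le_of_lt hg0 hx
  have hxI : x ∈ Set.Icc a₁ b₁ := by
    by_contra h; rw [hf, if_neg h] at hfpos; exact lt_irrefl 0 hfpos
  by_contra h
  push_neg at h
  have hxI2 : x ∈ Set.Icc a₂ b₂ := ⟨le_trans ha hxI.1, h⟩
  rw [hf, if_pos hxI, hg, if_pos hxI2] at hx
  have : max (x - a₂) 0 ≥ max (x - a₁) 0 :=
    max_le_max (by linarith) le_rfl
  linarith [hx, this]

/-- Two slope-1 right-triangular profiles: their pointwise strict order has no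
alternation f>g, g>f, f>g, g>f. -/
theorem triangle_profiles_no_alternation (a₁ b₁ a₂ b₂ : ℝ)
    (h₁ : a₁ ≤ b₁) (h₂ : a₂ ≤ b₂)
    (f g : ℝ → ℝ)
    (hf : ∀ x, f x = if x ∈ Set.Icc a₁ b₁ then max (x - a₁) 0 else 0)
    (hg : ∀ x, g x = if x ∈ Set.Icc a₂ b₂ then max (x - a₂) 0 else 0) :
    ¬ ∃ x₁ x₂ x₃ x₄ : ℝ, x₁ < x₂ ∧ x₂ < x₃ ∧ x₃ < x₄ ∧
      f x₁ > g x₁ ∧ g x₂ > f x₂ ∧ f x₃ > g x₃ ∧ g x₄ > f x₄ := by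
  rintro ⟨x₁, x₂, x₃, x₄, h12, h23, h34, hfg1, hgf2, hfg3, hgf4⟩
  rcases le_total a₂ a₁ with ha | ha
  · -- f > g forces x > b₂, after which g = 0 ≤ f
    have hb : b₂ < x₁ := tri_gt a₁ b₁ a₂ b₂ f g hf hg ha hfg1
    have hx4 : x₄ ∉ Set.Icc a₂ b₂ := by
      intro hx; exact absurd hx.2 (by linarith)
    have : g x₄ = 0 := by rw [hg, if_neg hx4]
    have := tri_nonneg a₁ b₁ f hf x₄
    linarith
  · -- g > f forces x > b₁, after which f = 0 ≤ g
    have hb : b₁ < x₂ := tri_gt a₂ b₂ a₁ b₁ g f hg hf ha hgf2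
    have hx3 : x₃ ∉ Set.Icc a₁ b₁ := by
      intro hx; exact absurd hx.2 (by linarith)
    have : f x₃ = 0 := by rw [hf, if_neg hx3]
    have := tri_nonneg a₂ b₂ g hg x₃
    linarith
end
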